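/- Let H and B be symmetric d×d matrices with ‖B − H‖ ≤ ε_B, suppose λ_min(H) ≤ −ε_H with ε_H > ε_B > 0, and let σ > 0. If s ∈ ℝ^d, s ≠ 0, satisfies ⟨s, H s⟩ ≤ λ_min(H)‖s‖² and ⟨s, B s⟩ + σ‖s‖³ ≥ 0, then σ‖s‖ ≥ ε_H − ε_B, and consequently (σ/6)‖s‖³ ≥ (ε_H − ε_B)³/(6σ²). -/

import Mathlib

/- In the negative-curvature case the model curvature `⟪s, B s⟫` is at most
`-(ε_H - ε_B)‖s‖²`, since `B` is within `ε_B` of `H` in operator norm. The termination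
condition `⟪s, B s⟫ + σ‖s‖³ ≥ 0` then forces `(ε_H - ε_B)‖s‖² ≤ σ‖s‖³`, i.e.
`ε_H - ε_B ≤ σ‖s‖`; cubing this (cubing is monotone on ℝ) gives the decrease bound. -/

open RealInnerProductSpace

/-- The smallest eigenvalue of a (self-adjoint) operator on `ℝ^d`, expressed as the
infimum of the Rayleigh quotient over the unit sphere. -/
noncomputable def lambdaMin {d : ℕ}
    (H : EuclideanSpace ℝ (Fin d) →L[ℝ] EuclideanSpace ℝ (Fin d)) : ℝ :=
  sInf ((fun s => ⟪s, H s⟫) '' {s : EuclideanSpace ℝ (Fin d) | ‖s‖ = 1})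

section

variable {E : Type*} [NormedAddCommGroup E] [InnerProductSpace ℝ E]

theorem real_inner_self_apply_le_opNorm_mul_sq (A : E →L[ℝ] E) (s : E) :
    ⟪s, A s⟫ ≤ ‖A‖ * ‖s‖ ^ 2 :=
  calc ⟪s, A s⟫ ≤ ‖s‖ * ‖A s‖ := real_inner_le_norm _ _
    _ ≤ ‖s‖ * (‖A‖ * ‖s‖) := by gcongr; exact A.le_opNorm s
    _ = ‖A‖ * ‖s‖ ^ 2 := by ring

theorem real_inner_self_apply_le_of_opNorm_sub_le {H B : E →L[ℝ] E} {ε μ : ℝ}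
    (hBH : ‖B - H‖ ≤ ε) {s : E} (hH : ⟪s, H s⟫ ≤ μ * ‖s‖ ^ 2) :
    ⟪s, B s⟫ ≤ (μ + ε) * ‖s‖ ^ 2 := by
  have hsplit : ⟪s, B s⟫ = ⟪s, H s⟫ + ⟪s, (B - H) s⟫ := by
    rw [sub_apply, inner_sub_right]
    ring
  have hdiff : ⟪s, (B - H) s⟫ ≤ ε * ‖s‖ ^ 2 :=
    (real_inner_self_apply_le_opNorm_mul_sq (B - H) s).trans (by gcongr)
  linarith

end

theorem le_mul_of_nonneg_add_mul_pow_three {q c σ r : ℝ} (hr : 0 < r)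
    (hq : q ≤ -c * r ^ 2) (h : 0 ≤ q + σ * r ^ 3) : c ≤ σ * r := by
  refine le_of_mul_le_mul_right ?_ (pow_pos hr 2)
  linear_combination hq + h

theorem pow_three_div_le_of_le_mul {c σ r : ℝ} (hσ : 0 < σ) (h : c ≤ σ * r) :
    c ^ 3 / (6 * σ ^ 2) ≤ σ / 6 * r ^ 3 := by
  rw [div_le_iff₀ (by positivity)]
  calc c ^ 3 ≤ (σ * r) ^ 3 := (Odd.pow_le_pow (by decide)).2 h
    _ = σ / 6 * r ^ 3 * (6 * σ ^ 2) := by field_simp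

theorem stmt_13_general {d : ℕ}
    (H B : EuclideanSpace ℝ (Fin d) →L[ℝ] EuclideanSpace ℝ (Fin d))
    (εB εH σ : ℝ) (hσ : 0 < σ)
    (hBH : ‖B - H‖ ≤ εB) (hlam : lambdaMin H ≤ -εH)
    (s : EuclideanSpace ℝ (Fin d)) (hs : s ≠ 0)
    (hcurv : ⟪s, H s⟫ ≤ lambdaMin H * ‖s‖ ^ 2)
    (hterm : 0 ≤ ⟪s, B s⟫ + σ * ‖s‖ ^ 3) :
    εH - εB ≤ σ * ‖s‖ ∧ (εH - εB) ^ 3 / (6 * σ ^ 2) ≤ (σ / 6) * ‖s‖ ^ 3 := by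
  have hH : ⟪s, H s⟫ ≤ -εH * ‖s‖ ^ 2 := hcurv.trans (by gcongr)
  have hB : ⟪s, B s⟫ ≤ -(εH - εB) * ‖s‖ ^ 2 := by
    linear_combination real_inner_self_apply_le_of_opNorm_sub_le hBH hH
  have hσs : εH - εB ≤ σ * ‖s‖ :=
    le_mul_of_nonneg_add_mul_pow_three (norm_pos_iff.2 hs) hB hterm
  exact ⟨hσs, pow_three_div_le_of_le_mul hσ hσs⟩

/-- lower bound `σ‖s‖ ≥ ε_H − ε_B` in the negative-curvature case of
the SARC analysis, and the resulting cubic decrease bound. -/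
theorem stmt_13 {d : ℕ}
    (H B : EuclideanSpace ℝ (Fin d) →L[ℝ] EuclideanSpace ℝ (Fin d))
    (hHsym : IsSelfAdjoint H) (hBsym : IsSelfAdjoint B)
    (εB εH σ : ℝ) (hεB : 0 < εB) (hεH : εB < εH) (hσ : 0 < σ)
    (hBH : ‖B - H‖ ≤ εB) (hlam : lambdaMin H ≤ -εH)
    (s : EuclideanSpace ℝ (Fin d)) (hs : s ≠ 0)
    (hcurv : ⟪s, H s⟫ ≤ lambdaMin H * ‖s‖ ^ 2)
    (hterm : 0 ≤ ⟪s, B s⟫ + σ * ‖s‖ ^ 3) :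
    εH - εB ≤ σ * ‖s‖ ∧ (εH - εB) ^ 3 / (6 * σ ^ 2) ≤ (σ / 6) * ‖s‖ ^ 3 :=
  stmt_13_general H B εB εH σ hσ hBH hlam s hs hcurv hterm
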